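/- Let n ≥ 1 be an integer, let Y be an n×n real symmetric positive definite matrix, let W be an n×n complex symmetric matrix, and let a ≥ 0 be a real number. If ‖Y^{1/2} W Y^{1/2}‖ ≤ a, then ‖W‖ ≤ a · tr(Y^{−1}), where ‖·‖ denotes the Frobenius norm ‖A‖ = (∑_{i,j} |a_{ij}|²)^{1/2}. -/

import Mathlib

/-- The Frobenius norm of a complex matrix. -/
noncomputable def frobNorm {n : ℕ} (A : Matrix (Fin n) (Fin n) ℂ) : ℝ :=
  Real.sqrt (∑ i, ∑ j, ‖A i j‖ ^ 2)

open scoped ComplexOrder in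
/-- The positive semidefinite square root of a positive semidefinite matrix
(the definition `Matrix.PosSemidef.sqrt` of the older Mathlib, since removed). -/
noncomputable def Matrix.PosSemidef.sqrt {n : Type*} [Fintype n] [DecidableEq n] {𝕜 : Type*}
    [RCLike 𝕜] {A : Matrix n n 𝕜} (hA : A.PosSemidef) : Matrix n n 𝕜 :=
  hA.1.eigenvectorUnitary.1 * Matrix.diagonal (((↑) : ℝ → 𝕜) ∘ (Real.sqrt ·) ∘ hA.1.eigenvalues) *
    (star hA.1.eigenvectorUnitary : Matrix n n 𝕜)

/-!
Since `Y = S * S` with `S = Y^{1/2}` symmetric, `W = S⁻¹ (S W S) S⁻¹`, so submultiplicativity of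
the Frobenius norm gives `‖W‖ ≤ ‖S⁻¹‖² ‖S W S‖`, and `‖S⁻¹‖² = tr (S⁻¹ᵀ S⁻¹) = tr Y⁻¹`.
-/

open scoped ComplexOrder

namespace Matrix.PosSemidef

variable {n 𝕜 : Type*} [Fintype n] [DecidableEq n] [RCLike 𝕜] {A : Matrix n n 𝕜}

theorem sqrt_eq_cfc (hA : A.PosSemidef) : hA.sqrt = cfc Real.sqrt A := by
  rw [hA.1.cfc_eq]
  rfl

theorem isHermitian_sqrt (hA : A.PosSemidef) : hA.sqrt.IsHermitian := by
  rw [sqrt_eq_cfc]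
  exact cfc_predicate Real.sqrt A

theorem sqrt_mul_sqrt (hA : A.PosSemidef) : hA.sqrt * hA.sqrt = A := by
  rw [sqrt_eq_cfc, ← cfc_mul Real.sqrt Real.sqrt A]
  conv_rhs => rw [← cfc_id' ℝ A hA.1]
  refine cfc_congr fun x hx => ?_
  rw [hA.1.spectrum_real_eq_range_eigenvalues] at hx
  obtain ⟨i, rfl⟩ := hx
  exact Real.mul_self_sqrt (hA.eigenvalues_nonneg i)

end Matrix.PosSemidef

theorem norm_le_norm_sq_mul_norm_conj {R : Type*} [SeminormedRing R] {s t : R}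
    (hts : t * s = 1) (hst : s * t = 1) (w : R) : ‖w‖ ≤ ‖t‖ ^ 2 * ‖s * w * s‖ := by
  calc ‖w‖ = ‖t * (s * w * s) * t‖ := by
        rw [show t * (s * w * s) * t = t * s * w * (s * t) by noncomm_ring, hts, hst, one_mul,
          mul_one]
    _ ≤ ‖t‖ * ‖s * w * s‖ * ‖t‖ := norm_mul₃_le
    _ = ‖t‖ ^ 2 * ‖s * w * s‖ := by ring

attribute [local instance] Matrix.frobeniusSeminormedAddCommGroup Matrix.frobeniusNormedRing

theorem frobNorm_eq_norm {n : ℕ} (A : Matrix (Fin n) (Fin n) ℂ) : frobNorm A = ‖A‖ := by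
  rw [Matrix.frobenius_norm_def, frobNorm, Real.sqrt_eq_rpow]
  simp only [← Real.rpow_natCast, Nat.cast_ofNat]

namespace Matrix

variable {m n : Type*} [Fintype m] [Fintype n]

theorem frobenius_norm_sq_eq_trace_transpose_mul_self (A : Matrix m n ℝ) :
    ‖A‖ ^ 2 = (Aᵀ * A).trace := by
  rw [frobenius_norm_def, ← Real.rpow_natCast, ← Real.rpow_mul (by positivity)]
  norm_num [trace, mul_apply, ← sq]
  exact Finset.sum_comm

theorem trace_inv_mul_self_eq_frobenius_norm_sq [DecidableEq n] {S : Matrix n n ℝ}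
    (hS : S.IsHermitian) : (S * S)⁻¹.trace = ‖S⁻¹‖ ^ 2 := by
  have hSinv : (S⁻¹)ᵀ = S⁻¹ := by
    simpa [conjTranspose_eq_transpose_of_trivial] using hS.inv.eq
  rw [frobenius_norm_sq_eq_trace_transpose_mul_self, hSinv, mul_inv_rev]

end Matrix

theorem statement15_general {n : ℕ} (Y : Matrix (Fin n) (Fin n) ℝ)
    (hY : Y.PosDef) (W : Matrix (Fin n) (Fin n) ℂ)
    (a : ℝ)
    (h : frobNorm (((Matrix.PosSemidef.sqrt hY.posSemidef).map (fun x => (x : ℂ))) * W *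
        ((Matrix.PosSemidef.sqrt hY.posSemidef).map (fun x => (x : ℂ)))) ≤ a) :
    frobNorm W ≤ a * (Y⁻¹).trace := by
  set S := hY.posSemidef.sqrt
  have hSS : S * S = Y := hY.posSemidef.sqrt_mul_sqrt
  have hSdet : IsUnit S.det := by
    rw [← Matrix.isUnit_iff_isUnit_det]
    exact isUnit_of_mul_isUnit_left (hSS ▸ hY.isUnit)
  set f := Complex.ofRealHom.mapMatrix (m := Fin n)
  have hTS : f S⁻¹ * f S = 1 := by rw [← map_mul, S.nonsing_inv_mul hSdet, map_one]
  have hST : f S * f S⁻¹ = 1 := by rw [← map_mul, S.mul_nonsing_inv hSdet, map_one]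
  have hnorm : ‖f S⁻¹‖ = ‖S⁻¹‖ := Matrix.frobenius_norm_map_eq _ _ fun x => by simp
  change frobNorm (f S * W * f S) ≤ a at h
  rw [frobNorm_eq_norm] at h ⊢
  calc ‖W‖ ≤ ‖f S⁻¹‖ ^ 2 * ‖f S * W * f S‖ := norm_le_norm_sq_mul_norm_conj hTS hST W
    _ ≤ ‖S⁻¹‖ ^ 2 * a := by rw [hnorm]; gcongr
    _ = a * (Y⁻¹).trace := by
      rw [← hSS, Matrix.trace_inv_mul_self_eq_frobenius_norm_sq hY.posSemidef.isHermitian_sqrt]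
      ring

theorem statement15 {n : ℕ} (hn : 1 ≤ n) (Y : Matrix (Fin n) (Fin n) ℝ)
    (hY : Y.PosDef) (W : Matrix (Fin n) (Fin n) ℂ) (hW : W.IsSymm)
    (a : ℝ) (ha : 0 ≤ a)
    (h : frobNorm (((Matrix.PosSemidef.sqrt hY.posSemidef).map (fun x => (x : ℂ))) * W *
        ((Matrix.PosSemidef.sqrt hY.posSemidef).map (fun x => (x : ℂ)))) ≤ a) :
    frobNorm W ≤ a * (Y⁻¹).trace :=
  statement15_general Y hY W a h
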